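/- (Fiber at a singular double point: (ℤ/2) × 𝔾_aⁿ.) Let k be a field, n ≥ 1, and a ∈ k with a ≠ 0. For a commutative k-algebra R set G(R) := {(ξ,η) ∈ Rⁿ × R : η + a·η² = 0 and 1 + 2aη ∈ R^×}, with operation (ξ̃,η̃)∘(ξ,η) := (ξ + (1+2aη)²·ξ̃, η + η̃ + 2a·η·η̃). Then for every R: (a) for (ξ,η) with η + aη² = 0 the element e := −a·η is an idempotent of R, the condition 1 + 2aη ∈ R^× is automatic, and (1+2aη)² = 1; (b) G(R) is a group, and the map (ξ,η) ↦ (−a·η, ξ) is a group isomorphism from G(R) onto E(R) × Rⁿ, where E(R) is the set of idempotents of R equipped with the group operation e∘e' = e + e' − 2ee' and Rⁿ carries addition. In particular, if R is a field then E(R) = {0,1} ≅ ℤ/2ℤ, so G(R) ≅ (ℤ/2ℤ) × Rⁿ. -/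

import Mathlib

/-!
Put `e = -aη`. The equation `η + aη² = 0` says exactly that `e` is idempotent, so
`1 + 2aη = 1 - 2e` squares to `1` and is in particular a unit. Hence the `ξ`-part of the law is
plain addition, while the `η`-part becomes `e + e' - 2ee'`, the symmetric difference of
idempotents; since `a` is invertible, `η ↦ -aη` is a bijection onto the idempotents.
-/

noncomputable section

variable {k : Type*} [Field k]

/-- The group `G(R)` at a singular double point: `{(ξ,η) : η + aη² = 0, 1 + 2aη ∈ R^×}`. -/
def singFiber (n : ℕ) (a : k) (R : Type*) [CommRing R] [Algebra k R] :
    Set ((Fin n → R) × R) :=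
  {p | p.2 + algebraMap k R a * p.2 ^ 2 = 0 ∧ IsUnit (1 + 2 * algebraMap k R a * p.2)}

/-- The operation `(ξ̃,η̃)∘(ξ,η) = (ξ + (1+2aη)²·ξ̃, η + η̃ + 2a·η·η̃)`. -/
def singFiberOp (n : ℕ) (a : k) {R : Type*} [CommRing R] [Algebra k R]
    (p q : (Fin n → R) × R) : (Fin n → R) × R :=
  (fun i => q.1 i + (1 + 2 * algebraMap k R a * q.2) ^ 2 * p.1 i,
   q.2 + p.2 + 2 * algebraMap k R a * q.2 * p.2)

section DoublePoint

variable {R : Type*} [CommRing R] {α η : R}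

theorem isIdempotentElem_neg_mul_of_add_mul_sq_eq_zero (h : η + α * η ^ 2 = 0) :
    IsIdempotentElem (-(α * η)) := by
  unfold IsIdempotentElem
  linear_combination α * h

theorem one_add_two_mul_sq_eq_one (h : η + α * η ^ 2 = 0) : (1 + 2 * α * η) ^ 2 = 1 := by
  linear_combination 4 * α * h

theorem isUnit_one_add_two_mul (h : η + α * η ^ 2 = 0) : IsUnit (1 + 2 * α * η) :=
  .of_pow_eq_one (one_add_two_mul_sq_eq_one h) two_ne_zero

theorem neg_mul_add_mul_sq_eq_zero {β e : R} (hαβ : α * β = 1) (he : IsIdempotentElem e) :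
    -(β * e) + α * (-(β * e)) ^ 2 = 0 := by
  linear_combination α * β ^ 2 * he.eq + β * e * hαβ

end DoublePoint

section SingFiber

variable {n : ℕ} {a : k} {R : Type*} [CommRing R] [Algebra k R]

theorem mem_singFiber_iff {p : (Fin n → R) × R} :
    p ∈ singFiber n a R ↔ p.2 + algebraMap k R a * p.2 ^ 2 = 0 :=
  ⟨And.left, fun h => ⟨h, isUnit_one_add_two_mul h⟩⟩

theorem singFiberOp_mem {p q : (Fin n → R) × R} (hp : p ∈ singFiber n a R)
    (hq : q ∈ singFiber n a R) : singFiberOp n a p q ∈ singFiber n a R := by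
  rw [mem_singFiber_iff] at *
  dsimp only [singFiberOp]
  linear_combination (1 + 2 * algebraMap k R a * q.2) ^ 2 * hp + hq

theorem zero_mem_singFiber : ((0, 0) : (Fin n → R) × R) ∈ singFiber n a R :=
  mem_singFiber_iff.2 (by simp)

theorem singFiberOp_zero_right (p : (Fin n → R) × R) : singFiberOp n a p (0, 0) = p := by
  ext <;> simp [singFiberOp]

theorem singFiberOp_zero_left (p : (Fin n → R) × R) : singFiberOp n a (0, 0) p = p := by
  ext <;> simp [singFiberOp]

theorem singFiberOp_assoc (p q s : (Fin n → R) × R) :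
    singFiberOp n a (singFiberOp n a p q) s = singFiberOp n a p (singFiberOp n a q s) := by
  ext <;> simp only [singFiberOp] <;> ring

theorem singFiberOp_fst {p q : (Fin n → R) × R} (hq : q ∈ singFiber n a R) :
    (singFiberOp n a p q).1 = p.1 + q.1 := by
  ext i
  simp [singFiberOp, one_add_two_mul_sq_eq_one (mem_singFiber_iff.1 hq), add_comm]

theorem neg_mul_singFiberOp_snd (p q : (Fin n → R) × R) :
    -(algebraMap k R a * (singFiberOp n a p q).2) =
      -(algebraMap k R a * p.2) + -(algebraMap k R a * q.2) -
        2 * -(algebraMap k R a * p.2) * -(algebraMap k R a * q.2) := by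
  simp only [singFiberOp]
  ring

theorem singFiberOp_neg_fst_self {p : (Fin n → R) × R} (hp : p ∈ singFiber n a R) :
    singFiberOp n a (-p.1, p.2) p = (0, 0) := by
  refine Prod.ext ?_ ?_
  · simp [singFiberOp_fst hp]
  · dsimp only [singFiberOp]
    linear_combination 2 * mem_singFiber_iff.1 hp

theorem singFiberOp_self_neg_fst {p : (Fin n → R) × R} (hp : p ∈ singFiber n a R) :
    singFiberOp n a p (-p.1, p.2) = (0, 0) := by
  refine Prod.ext ?_ ?_
  · simp [singFiberOp_fst (q := (-p.1, p.2)) hp]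
  · dsimp only [singFiberOp]
    linear_combination 2 * mem_singFiber_iff.1 hp

variable (R) in
theorem algebraMap_mul_algebraMap_inv (ha : a ≠ 0) :
    algebraMap k R a * algebraMap k R a⁻¹ = 1 := by
  rw [← map_mul, mul_inv_cancel₀ ha, map_one]

def singFiberEquiv (ha : a ≠ 0) :
    {p : (Fin n → R) × R // p ∈ singFiber n a R} ≃ {e : R // e * e = e} × (Fin n → R) where
  toFun p := (⟨-(algebraMap k R a * p.1.2),
    isIdempotentElem_neg_mul_of_add_mul_sq_eq_zero (mem_singFiber_iff.1 p.2)⟩, p.1.1)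
  invFun e := ⟨(e.2, -(algebraMap k R a⁻¹ * e.1)), mem_singFiber_iff.2
    (neg_mul_add_mul_sq_eq_zero (algebraMap_mul_algebraMap_inv R ha) e.1.2)⟩
  left_inv p := Subtype.ext <| Prod.ext rfl <| by
    linear_combination p.1.2 * algebraMap_mul_algebraMap_inv R ha
  right_inv e := Prod.ext (Subtype.ext <| by
    linear_combination (e.1 : R) * algebraMap_mul_algebraMap_inv R ha) rfl

end SingFiber

theorem sing_fiber_group_general {n : ℕ} (a : k) (ha : a ≠ 0)
    (R : Type*) [CommRing R] [Algebra k R] :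
    -- (a)
    (∀ η : R, η + algebraMap k R a * η ^ 2 = 0 →
      (-(algebraMap k R a * η)) * (-(algebraMap k R a * η)) = -(algebraMap k R a * η) ∧
      IsUnit (1 + 2 * algebraMap k R a * η) ∧
      (1 + 2 * algebraMap k R a * η) ^ 2 = 1) ∧
    -- (b): `G(R)` is a group with identity `(0,0)`
    ((∀ p q, p ∈ singFiber n a R → q ∈ singFiber n a R →
        singFiberOp n a p q ∈ singFiber n a R) ∧
      ((0, 0) ∈ singFiber n a R) ∧
      (∀ p, p ∈ singFiber n a R →
        singFiberOp n a p (0, 0) = p ∧ singFiberOp n a (0, 0) p = p) ∧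
      (∀ p q s, p ∈ singFiber n a R → q ∈ singFiber n a R → s ∈ singFiber n a R →
        singFiberOp n a (singFiberOp n a p q) s = singFiberOp n a p (singFiberOp n a q s)) ∧
      (∀ p, p ∈ singFiber n a R → ∃ q, q ∈ singFiber n a R ∧
        singFiberOp n a p q = (0, 0) ∧ singFiberOp n a q p = (0, 0))) ∧
    -- `(ξ,η) ↦ (−aη, ξ)` is a group isomorphism onto `E(R) × Rⁿ`
    (∃ φ : {p : (Fin n → R) × R // p ∈ singFiber n a R} ≃
        ({e : R // e * e = e} × (Fin n → R)),
      (∀ p, ((φ p).1 : R) = -(algebraMap k R a * p.val.2) ∧ (φ p).2 = p.val.1) ∧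
      (∀ p q s, s.val = singFiberOp n a p.val q.val →
        ((φ s).1 : R) = ((φ p).1 : R) + ((φ q).1 : R) - 2 * ((φ p).1 : R) * ((φ q).1 : R) ∧
        (φ s).2 = (φ p).2 + (φ q).2)) ∧
    -- in particular, over a field the only idempotents are `0` and `1`
    (IsField R → ∀ e : R, e * e = e → e = 0 ∨ e = 1) := by
  refine ⟨fun η h => ⟨isIdempotentElem_neg_mul_of_add_mul_sq_eq_zero h,
      isUnit_one_add_two_mul h, one_add_two_mul_sq_eq_one h⟩,
    ⟨fun p q => singFiberOp_mem, zero_mem_singFiber,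
      fun p _ => ⟨singFiberOp_zero_right p, singFiberOp_zero_left p⟩,
      fun p q s _ _ _ => singFiberOp_assoc p q s,
      fun p hp => ⟨(-p.1, p.2), hp, singFiberOp_self_neg_fst hp, singFiberOp_neg_fst_self hp⟩⟩,
    ⟨singFiberEquiv ha, fun p => ⟨rfl, rfl⟩, fun p q ⟨s, _⟩ hs => ?_⟩,
    fun hR e he => ?_⟩
  · obtain rfl : s = _ := hs
    exact ⟨neg_mul_singFiberOp_snd p.1 q.1, singFiberOp_fst q.2⟩
  · let := hR.toField
    exact IsIdempotentElem.iff_eq_zero_or_one.1 he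

/-- **Fiber at a singular double point: `(ℤ/2) × 𝔾ₐⁿ`.**
(a) If `η + aη² = 0` then `e := −aη` is idempotent, `1 + 2aη` is automatically a unit, and
`(1 + 2aη)² = 1`; (b) `G(R)` is a group and `(ξ,η) ↦ (−aη, ξ)` is a group isomorphism onto
`E(R) × Rⁿ`, where `E(R)` is the set of idempotents with `e∘e' = e + e' − 2ee'` and `Rⁿ`
carries addition.  In particular over a field `E(R) = {0,1} ≅ ℤ/2ℤ`. -/
theorem sing_fiber_group {n : ℕ} (hn : 1 ≤ n) (a : k) (ha : a ≠ 0)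
    (R : Type*) [CommRing R] [Algebra k R] :
    -- (a)
    (∀ η : R, η + algebraMap k R a * η ^ 2 = 0 →
      (-(algebraMap k R a * η)) * (-(algebraMap k R a * η)) = -(algebraMap k R a * η) ∧
      IsUnit (1 + 2 * algebraMap k R a * η) ∧
      (1 + 2 * algebraMap k R a * η) ^ 2 = 1) ∧
    -- (b): `G(R)` is a group with identity `(0,0)`
    ((∀ p q, p ∈ singFiber n a R → q ∈ singFiber n a R →
        singFiberOp n a p q ∈ singFiber n a R) ∧
      ((0, 0) ∈ singFiber n a R) ∧
      (∀ p, p ∈ singFiber n a R →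
        singFiberOp n a p (0, 0) = p ∧ singFiberOp n a (0, 0) p = p) ∧
      (∀ p q s, p ∈ singFiber n a R → q ∈ singFiber n a R → s ∈ singFiber n a R →
        singFiberOp n a (singFiberOp n a p q) s = singFiberOp n a p (singFiberOp n a q s)) ∧
      (∀ p, p ∈ singFiber n a R → ∃ q, q ∈ singFiber n a R ∧
        singFiberOp n a p q = (0, 0) ∧ singFiberOp n a q p = (0, 0))) ∧
    -- `(ξ,η) ↦ (−aη, ξ)` is a group isomorphism onto `E(R) × Rⁿ`
    (∃ φ : {p : (Fin n → R) × R // p ∈ singFiber n a R} ≃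
        ({e : R // e * e = e} × (Fin n → R)),
      (∀ p, ((φ p).1 : R) = -(algebraMap k R a * p.val.2) ∧ (φ p).2 = p.val.1) ∧
      (∀ p q s, s.val = singFiberOp n a p.val q.val →
        ((φ s).1 : R) = ((φ p).1 : R) + ((φ q).1 : R) - 2 * ((φ p).1 : R) * ((φ q).1 : R) ∧
        (φ s).2 = (φ p).2 + (φ q).2)) ∧
    -- in particular, over a field the only idempotents are `0` and `1`
    (IsField R → ∀ e : R, e * e = e → e = 0 ∨ e = 1) :=
  sing_fiber_group_general a ha R

end
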